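/- arXiv:2210.10727 — 7 statements merged into one kernel-verified Lean document; each statement's English description precedes it below -/
import Mathlib

section
/- Let T be a semi-infinite tetradiagonal lower Hessenberg matrix with entries c_n on the diagonal, b_n on the first subdiagonal, a_n on the second subdiagonal, and 1 on the superdiagonal. If T = L₁L₂U where L₁, L₂ are lower bidiagonal unitriangular matrices with subdiagonal entries α_{3n+2} (for L₁) and α_{3n+3} (for L₂), and U is upper bidiagonal with diagonal entries α_{3n+1} and superdiagonal 1, then c_n = α_{3n+1} + α_{3n} + α_{3n-1}, b_n = α_{3n}α_{3n-2} + α_{3n-1}α_{3n-2} + α_{3n-1}α_{3n-3}, and a_n = α_{3n-1}α_{3n-3}α_{3n-5}, where α_k = 0 for k ≤ 0. -/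
/-- Entrywise product of semi-infinite (banded) matrices; the truncation range
`i + j + 2` covers all nonzero terms for the banded matrices considered here. -/
def matMul (A B : ℕ → ℕ → ℝ) : ℕ → ℕ → ℝ :=
  fun i j => ∑ k ∈ Finset.range (i + j + 2), A i k * B k j

/-- Lower bidiagonal unitriangular matrix `L₁` with entry `α (3n+2)` at `(n+1, n)`. -/
def L1mat (α : ℤ → ℝ) : ℕ → ℕ → ℝ :=
  fun i j => if i = j then 1 else if i = j + 1 then α (3 * (j : ℤ) + 2) else 0

/-- Lower bidiagonal unitriangular matrix `L₂` with entry `α (3n+3)` at `(n+1, n)`. -/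
def L2mat (α : ℤ → ℝ) : ℕ → ℕ → ℝ :=
  fun i j => if i = j then 1 else if i = j + 1 then α (3 * (j : ℤ) + 3) else 0

/-- Upper bidiagonal matrix `U` with diagonal entries `α (3n+1)` and superdiagonal 1. -/
def Umat (α : ℤ → ℝ) : ℕ → ℕ → ℝ :=
  fun i j => if i = j then α (3 * (j : ℤ) + 1) else if j = i + 1 then 1 else 0


/-! The product `L₁L₂` is lower triangular with diagonals `1`, `α (3i+2) + α (3i+3)` and
`α (3i+5) α (3i+3)`. Multiplying by the upper bidiagonal `U` on the right gives
`T i (j+1) = (L₁L₂) i j + (L₁L₂) i (j+1) α (3j+4)` and `T i 0 = (L₁L₂) i 0 α 1`; the first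
column is where the convention `α k = 0` for `k ≤ 0` is needed to make the formulas uniform. -/

open Finset

lemma matMul_L1mat_zero (α : ℤ → ℝ) (B : ℕ → ℕ → ℝ) (j : ℕ) :
    matMul (L1mat α) B 0 j = B 0 j := by
  unfold matMul
  rw [sum_eq_single_of_mem 0 (by simp)]
  · simp [L1mat]
  · intro k _ hk
    simp [L1mat, hk.symm, hk]

lemma matMul_L1mat_succ (α : ℤ → ℝ) (B : ℕ → ℕ → ℝ) (i j : ℕ) :
    matMul (L1mat α) B (i + 1) j = α (3 * i + 2) * B i j + B (i + 1) j := by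
  unfold matMul
  rw [sum_eq_add_of_mem i (i + 1) (by simp; omega) (by simp; omega) (by omega)]
  · simp [L1mat]
  · rintro k - ⟨hki, hki'⟩
    simp [L1mat, Ne.symm hki, Ne.symm hki']

lemma matMul_Umat_zero (A : ℕ → ℕ → ℝ) (α : ℤ → ℝ) (i : ℕ) :
    matMul A (Umat α) i 0 = A i 0 * α 1 := by
  unfold matMul
  rw [sum_eq_single_of_mem 0 (by simp)]
  · simp [Umat]
  · intro k _ hk
    simp [Umat, hk]

lemma matMul_Umat_succ (A : ℕ → ℕ → ℝ) (α : ℤ → ℝ) (i j : ℕ) :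
    matMul A (Umat α) i (j + 1) = A i j + A i (j + 1) * α (3 * j + 4) := by
  unfold matMul
  rw [sum_eq_add_of_mem j (j + 1) (by simp; omega) (by simp; omega) (by omega)]
  · have : (3 : ℤ) * (j + 1) + 1 = 3 * j + 4 := by ring
    simp [Umat, this]
  · rintro k - ⟨hkj, hkj'⟩
    simp [Umat, Ne.symm hkj, hkj']

section L1L2

variable (α : ℤ → ℝ)

@[simp] lemma L2mat_self (i : ℕ) : L2mat α i i = 1 := by simp [L2mat]

@[simp] lemma L2mat_succ_self (i : ℕ) : L2mat α (i + 1) i = α (3 * i + 3) := by simp [L2mat]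

lemma L2mat_of_lt {i j : ℕ} (h : i < j) : L2mat α i j = 0 := by
  unfold L2mat
  rw [if_neg (by omega), if_neg (by omega)]

lemma L2mat_of_add_two_le {i j : ℕ} (h : j + 2 ≤ i) : L2mat α i j = 0 := by
  unfold L2mat
  rw [if_neg (by omega), if_neg (by omega)]

lemma matMul_L1mat_L2mat_self (i : ℕ) : matMul (L1mat α) (L2mat α) i i = 1 := by
  cases i with
  | zero => simp [matMul_L1mat_zero]
  | succ i => simp [matMul_L1mat_succ, L2mat_of_lt]

lemma matMul_L1mat_L2mat_succ_self (i : ℕ) :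
    matMul (L1mat α) (L2mat α) (i + 1) i = α (3 * i + 2) + α (3 * i + 3) := by
  simp [matMul_L1mat_succ]

lemma matMul_L1mat_L2mat_add_two_self (i : ℕ) :
    matMul (L1mat α) (L2mat α) (i + 2) i = α (3 * i + 5) * α (3 * i + 3) := by
  rw [matMul_L1mat_succ, L2mat_succ_self, L2mat_of_add_two_le α le_rfl]
  push_cast
  ring_nf

lemma matMul_L1mat_L2mat_add_three_self (i : ℕ) :
    matMul (L1mat α) (L2mat α) (i + 3) i = 0 := by
  rw [matMul_L1mat_succ, L2mat_of_add_two_le α le_rfl, L2mat_of_add_two_le α (by omega)]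
  ring

end L1L2

section Boundary

variable {α : ℤ → ℝ} (hα0 : ∀ k : ℤ, k ≤ 0 → α k = 0)
include hα0

lemma matMul_L1mat_L2mat_Umat_self (n : ℕ) :
    matMul (matMul (L1mat α) (L2mat α)) (Umat α) n n =
      α (3 * n + 1) + α (3 * n) + α (3 * n - 1) := by
  cases n with
  | zero => simp [matMul_Umat_zero, matMul_L1mat_L2mat_self, hα0 0, hα0 (-1)]
  | succ m =>
    rw [matMul_Umat_succ, matMul_L1mat_L2mat_succ_self, matMul_L1mat_L2mat_self]
    push_cast
    ring_nf

lemma matMul_L1mat_L2mat_Umat_succ_self (m : ℕ) :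
    matMul (matMul (L1mat α) (L2mat α)) (Umat α) (m + 1) m =
      α (3 * m + 3) * α (3 * m + 1) + α (3 * m + 2) * α (3 * m + 1) +
        α (3 * m + 2) * α (3 * m) := by
  cases m with
  | zero =>
    rw [matMul_Umat_zero, matMul_L1mat_L2mat_succ_self]
    simp only [Nat.cast_zero, mul_zero, zero_add, hα0 0 le_rfl, add_zero]
    ring
  | succ m =>
    rw [matMul_Umat_succ, matMul_L1mat_L2mat_add_two_self, matMul_L1mat_L2mat_succ_self]
    push_cast
    ring_nf

end Boundary

lemma matMul_L1mat_L2mat_Umat_add_two_self (α : ℤ → ℝ) (m : ℕ) :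
    matMul (matMul (L1mat α) (L2mat α)) (Umat α) (m + 2) m =
      α (3 * m + 5) * α (3 * m + 3) * α (3 * m + 1) := by
  cases m with
  | zero =>
    rw [matMul_Umat_zero, matMul_L1mat_L2mat_add_two_self]
    simp
  | succ m =>
    rw [matMul_Umat_succ, matMul_L1mat_L2mat_add_three_self, matMul_L1mat_L2mat_add_two_self]
    push_cast
    ring_nf

theorem stmt0 (α : ℤ → ℝ) (hα0 : ∀ k : ℤ, k ≤ 0 → α k = 0)
    (a b c : ℕ → ℝ) (T : ℕ → ℕ → ℝ)
    (hT : ∀ i j : ℕ, T i j =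
      if i = j then c i else if i = j + 1 then b i else if i = j + 2 then a i
      else if j = i + 1 then 1 else 0)
    (hfac : ∀ i j : ℕ, T i j = matMul (matMul (L1mat α) (L2mat α)) (Umat α) i j) :
    (∀ n : ℕ, c n = α (3 * (n : ℤ) + 1) + α (3 * (n : ℤ)) + α (3 * (n : ℤ) - 1)) ∧
    (∀ n : ℕ, 1 ≤ n → b n =
      α (3 * (n : ℤ)) * α (3 * (n : ℤ) - 2) + α (3 * (n : ℤ) - 1) * α (3 * (n : ℤ) - 2) +
        α (3 * (n : ℤ) - 1) * α (3 * (n : ℤ) - 3)) ∧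
    (∀ n : ℕ, 2 ≤ n → a n =
      α (3 * (n : ℤ) - 1) * α (3 * (n : ℤ) - 3) * α (3 * (n : ℤ) - 5)) := by
  refine ⟨fun n => ?_, fun n hn => ?_, fun n hn => ?_⟩
  · rw [← matMul_L1mat_L2mat_Umat_self hα0, ← hfac, hT, if_pos rfl]
  · obtain ⟨m, rfl⟩ := Nat.exists_eq_add_of_le' hn
    have hb : T (m + 1) m = b (m + 1) := by simp [hT]
    rw [← hb, hfac, matMul_L1mat_L2mat_Umat_succ_self hα0]
    push_cast
    ring_nf
  · obtain ⟨m, rfl⟩ := Nat.exists_eq_add_of_le' hn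
    have ha : T (m + 2) m = a (m + 2) := by simp [hT]
    rw [← ha, hfac, matMul_L1mat_L2mat_Umat_add_two_self]
    push_cast
    ring_nf
end

section
/- Suppose the (N+1)×(N+1) tetradiagonal Hessenberg matrix T^{[N]} (diagonal c_n, subdiagonals b_n, a_n, superdiagonal 1) admits a Gauss–Borel factorization T^{[N]} = L^{[N]}U^{[N]} with L^{[N]} lower unitriangular with only two nonzero subdiagonals (entries m_n on the first, l_n on the second) and U^{[N]} upper bidiagonal with diagonal entries α_{3n+1} and superdiagonal 1. Then, writing δ^{[n]} = det T^{[n]} for the leading principal minors (δ^{[-1]} = 1, δ^{[-2]} = 0), one has for n ≥ 1: l_{n+1} = a_{n+1}δ^{[n-2]}/δ^{[n-1]}, m_n = c_n − δ^{[n]}/δ^{[n-1]}, and α_{3n-2} = δ^{[n-1]}/δ^{[n-2]}, provided all δ^{[k]} ≠ 0. -/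
/-- Truncated tetradiagonal Hessenberg matrix. -/
def Ttrunc (a b c : ℕ → ℝ) (N : ℕ) : Matrix (Fin (N + 1)) (Fin (N + 1)) ℝ :=
  Matrix.of fun i j =>
    if (i : ℕ) = j then c i
    else if (i : ℕ) = (j : ℕ) + 1 then b i
    else if (i : ℕ) = (j : ℕ) + 2 then a i
    else if (j : ℕ) = (i : ℕ) + 1 then 1 else 0

/-- `δ^{[n]} = det T^{[n]}` for `n ≥ 0`, with conventions `δ^{[-1]} = 1`, `δ^{[-2]} = 0`. -/
noncomputable def deltaExt (a b c : ℕ → ℝ) : ℤ → ℝ := fun n =>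
  if n = -1 then 1 else if n < 0 then 0 else (Ttrunc a b c n.toNat).det

/-- Lower unitriangular factor with first subdiagonal `m` and second subdiagonal `l`
(entry `m i` at `(i, i-1)`, entry `l i` at `(i, i-2)`). -/
def Lfin (m l : ℕ → ℝ) (N : ℕ) : Matrix (Fin (N + 1)) (Fin (N + 1)) ℝ :=
  Matrix.of fun i j =>
    if (i : ℕ) = j then 1
    else if (i : ℕ) = (j : ℕ) + 1 then m i
    else if (i : ℕ) = (j : ℕ) + 2 then l i else 0

/-- Upper bidiagonal factor with diagonal entries `αd n` (representing `α_{3n+1}`)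
and unit superdiagonal. -/
def Ufin (αd : ℕ → ℝ) (N : ℕ) : Matrix (Fin (N + 1)) (Fin (N + 1)) ℝ :=
  Matrix.of fun i j =>
    if (i : ℕ) = j then αd i else if (j : ℕ) = (i : ℕ) + 1 then 1 else 0

open Finset

/-- ℕ-indexed entry functions. -/
def Tent (a b c : ℕ → ℝ) (i j : ℕ) : ℝ :=
  if i = j then c i else if i = j + 1 then b i else if i = j + 2 then a i
  else if j = i + 1 then 1 else 0

def Lent (m l : ℕ → ℝ) (i j : ℕ) : ℝ :=
  if i = j then 1 else if i = j + 1 then m i else if i = j + 2 then l i else 0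

def Uent (αd : ℕ → ℝ) (i j : ℕ) : ℝ :=
  if i = j then αd i else if j = i + 1 then 1 else 0

lemma sum_range_single (f : ℕ → ℝ) (M p : ℕ) (hp : p < M)
    (h0 : ∀ k < M, k ≠ p → f k = 0) : ∑ k ∈ Finset.range M, f k = f p :=
  Finset.sum_eq_single_of_mem p (Finset.mem_range.mpr hp)
    (fun k hk hk' => h0 k (Finset.mem_range.mp hk) hk')

lemma sum_range_pair (f : ℕ → ℝ) (M p q : ℕ) (hpq : p ≠ q) (hp : p < M) (hq : q < M)
    (h0 : ∀ k < M, k ≠ p → k ≠ q → f k = 0) :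
    ∑ k ∈ Finset.range M, f k = f p + f q := by
  rw [← Finset.sum_pair hpq]
  symm
  apply Finset.sum_subset
  · intro x hx
    simp only [Finset.mem_insert, Finset.mem_singleton] at hx
    rcases hx with rfl | rfl
    · exact Finset.mem_range.mpr hp
    · exact Finset.mem_range.mpr hq
  · intro x hx hx'
    simp only [Finset.mem_insert, Finset.mem_singleton, not_or] at hx'
    exact h0 x (Finset.mem_range.mp hx) hx'.1 hx'.2

lemma mulEnt (m l αd : ℕ → ℝ) (N : ℕ) (i j : Fin (N + 1)) :
    (Lfin m l N * Ufin αd N) i j =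
      ∑ k ∈ Finset.range (N + 1), Lent m l (i : ℕ) k * Uent αd k (j : ℕ) := by
  rw [Matrix.mul_apply,
    ← Fin.sum_univ_eq_sum_range (fun k => Lent m l (i : ℕ) k * Uent αd k (j : ℕ)) (N + 1)]
  rfl

lemma entryEq (a b c m l αd : ℕ → ℝ) (N : ℕ)
    (hfac : Ttrunc a b c N = Lfin m l N * Ufin αd N) (i j : ℕ)
    (hi : i < N + 1) (hj : j < N + 1) :
    Tent a b c i j = ∑ k ∈ Finset.range (N + 1), Lent m l i k * Uent αd k j := by
  have h := congrFun (congrFun hfac ⟨i, hi⟩) ⟨j, hj⟩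
  rw [mulEnt] at h
  exact h

lemma trunc_fac (a b c m l αd : ℕ → ℝ) (N : ℕ)
    (hfac : Ttrunc a b c N = Lfin m l N * Ufin αd N) (n : ℕ) (hn : n ≤ N) :
    Ttrunc a b c n = Lfin m l n * Ufin αd n := by
  ext i j
  have hi : (i : ℕ) < N + 1 := by omega
  have hj : (j : ℕ) < N + 1 := by omega
  have h := entryEq a b c m l αd N hfac i j hi hj
  have h2 : (∑ k ∈ Finset.range (N + 1), Lent m l (i : ℕ) k * Uent αd k (j : ℕ))
      = ∑ k ∈ Finset.range (n + 1), Lent m l (i : ℕ) k * Uent αd k (j : ℕ) := by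
    symm
    apply Finset.sum_subset (Finset.range_subset_range.mpr (by omega))
    intro k hk hk'
    simp only [Finset.mem_range] at hk hk'
    have hik : (i : ℕ) < k := by omega
    have hL : Lent m l (i : ℕ) k = 0 := by
      unfold Lent
      split_ifs <;> first | rfl | (exfalso; omega)
    rw [hL, zero_mul]
  calc Ttrunc a b c n i j = Tent a b c (i : ℕ) (j : ℕ) := rfl
    _ = ∑ k ∈ Finset.range (N + 1), Lent m l (i : ℕ) k * Uent αd k (j : ℕ) := h
    _ = ∑ k ∈ Finset.range (n + 1), Lent m l (i : ℕ) k * Uent αd k (j : ℕ) := h2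
    _ = (Lfin m l n * Ufin αd n) i j := (mulEnt m l αd n i j).symm

lemma det_trunc (a b c m l αd : ℕ → ℝ) (N : ℕ)
    (hfac : Ttrunc a b c N = Lfin m l N * Ufin αd N) (n : ℕ) (hn : n ≤ N) :
    (Ttrunc a b c n).det = ∏ k ∈ Finset.range (n + 1), αd k := by
  rw [trunc_fac a b c m l αd N hfac n hn, Matrix.det_mul]
  have hL : (Lfin m l n).det = 1 := by
    rw [Matrix.det_of_lowerTriangular]
    · apply Finset.prod_eq_one
      intro i _
      simp [Lfin]
    · intro i j hij
      have hij' : (i : ℕ) < (j : ℕ) := hij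
      show (if (i : ℕ) = (j : ℕ) then (1:ℝ)
        else if (i : ℕ) = (j : ℕ) + 1 then m i
        else if (i : ℕ) = (j : ℕ) + 2 then l i else 0) = 0
      split_ifs <;> first | rfl | (exfalso; omega)
  have hU : (Ufin αd n).det = ∏ k ∈ Finset.range (n + 1), αd k := by
    rw [Matrix.det_of_upperTriangular]
    · rw [← Fin.prod_univ_eq_prod_range (fun k => αd k) (n + 1)]
      apply Finset.prod_congr rfl
      intro i _
      simp [Ufin]
    · intro i j hij
      have hij' : (j : ℕ) < (i : ℕ) := hij
      show (if (i : ℕ) = (j : ℕ) then αd i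
        else if (j : ℕ) = (i : ℕ) + 1 then (1:ℝ) else 0) = 0
      split_ifs <;> first | rfl | (exfalso; omega)
  rw [hL, hU, one_mul]

lemma deltaProd (a b c m l αd : ℕ → ℝ) (N : ℕ)
    (hfac : Ttrunc a b c N = Lfin m l N * Ufin αd N) :
    ∀ n : ℕ, n ≤ N + 1 → deltaExt a b c ((n : ℤ) - 1) = ∏ k ∈ Finset.range n, αd k := by
  intro n hn
  match n with
  | 0 => norm_num [deltaExt]
  | (p + 1) =>
    have hcast : ((p + 1 : ℕ) : ℤ) - 1 = (p : ℤ) := by push_cast; ring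
    rw [hcast]
    simp only [deltaExt]
    rw [if_neg (by omega), if_neg (by omega)]
    rw [show ((p : ℤ)).toNat = p from Int.toNat_natCast p]
    exact det_trunc a b c m l αd N hfac p (by omega)

theorem stmt3 (a b c m l αd : ℕ → ℝ) (N : ℕ)
    (hfac : Ttrunc a b c N = Lfin m l N * Ufin αd N)
    (hδ : ∀ k : ℕ, k ≤ N → deltaExt a b c k ≠ 0) :
    (∀ n : ℕ, 1 ≤ n → n ≤ N →
      m n = c n - deltaExt a b c n / deltaExt a b c ((n : ℤ) - 1)) ∧
    (∀ n : ℕ, 1 ≤ n → n + 1 ≤ N →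
      l (n + 1) = a (n + 1) * deltaExt a b c ((n : ℤ) - 2) / deltaExt a b c ((n : ℤ) - 1)) ∧
    (∀ n : ℕ, 1 ≤ n → n ≤ N + 1 →
      αd (n - 1) = deltaExt a b c ((n : ℤ) - 1) / deltaExt a b c ((n : ℤ) - 2)) := by
  have hD := deltaProd a b c m l αd N hfac
  have hα : ∀ k : ℕ, k ≤ N → αd k ≠ 0 := by
    intro k hk
    have h1 := hδ k hk
    have h2 := hD (k + 1) (by omega)
    rw [show ((k + 1 : ℕ) : ℤ) - 1 = ((k : ℕ) : ℤ) by push_cast; ring] at h2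
    rw [h2, Finset.prod_range_succ] at h1
    exact right_ne_zero_of_mul h1
  have hDne : ∀ k : ℕ, k ≤ N + 1 → (∏ i ∈ Finset.range k, αd i) ≠ 0 := by
    intro k hk
    rw [Finset.prod_ne_zero_iff]
    intro i hi
    exact hα i (by simp only [Finset.mem_range] at hi; omega)
  refine ⟨?_, ?_, ?_⟩
  · -- m
    intro n h1 h2
    obtain ⟨p, rfl⟩ : ∃ p, n = p + 1 := ⟨n - 1, by omega⟩
    have e := entryEq a b c m l αd N hfac (p + 1) (p + 1) (by omega) (by omega)
    have hs : ∑ k ∈ Finset.range (N + 1), Lent m l (p + 1) k * Uent αd k (p + 1)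
        = Lent m l (p + 1) p * Uent αd p (p + 1)
          + Lent m l (p + 1) (p + 1) * Uent αd (p + 1) (p + 1) := by
      apply sum_range_pair _ _ _ _ (by omega) (by omega) (by omega)
      intro k hk hk1 hk2
      unfold Lent Uent
      split_ifs <;> first | ring1 | (exfalso; omega)
    rw [hs] at e
    have eT : Tent a b c (p + 1) (p + 1) = c (p + 1) := by
      unfold Tent; rw [if_pos rfl]
    have eL1 : Lent m l (p + 1) p = m (p + 1) := by
      unfold Lent; rw [if_neg (by omega), if_pos rfl]
    have eU1 : Uent αd p (p + 1) = 1 := by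
      unfold Uent; rw [if_neg (by omega), if_pos rfl]
    have eL2 : Lent m l (p + 1) (p + 1) = 1 := by
      unfold Lent; rw [if_pos rfl]
    have eU2 : Uent αd (p + 1) (p + 1) = αd (p + 1) := by
      unfold Uent; rw [if_pos rfl]
    rw [eT, eL1, eU1, eL2, eU2] at e
    have hδn : deltaExt a b c ((p + 1 : ℕ) : ℤ) = ∏ k ∈ Finset.range (p + 2), αd k := by
      have h := hD (p + 2) (by omega)
      rw [show ((p + 2 : ℕ) : ℤ) - 1 = ((p + 1 : ℕ) : ℤ) by push_cast; ring] at h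
      exact h
    rw [hδn, hD (p + 1) (by omega), Finset.prod_range_succ,
      mul_div_cancel_left₀ _ (hDne (p + 1) (by omega))]
    linarith [e]
  · -- l
    intro n h1 h2
    obtain ⟨p, rfl⟩ : ∃ p, n = p + 1 := ⟨n - 1, by omega⟩
    have e := entryEq a b c m l αd N hfac (p + 2) p (by omega) (by omega)
    have hs : ∑ k ∈ Finset.range (N + 1), Lent m l (p + 2) k * Uent αd k p
        = Lent m l (p + 2) p * Uent αd p p := by
      apply sum_range_single _ _ _ (by omega)
      intro k hk hk1
      unfold Lent Uent
      split_ifs <;> first | ring1 | (exfalso; omega)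
    rw [hs] at e
    have eT : Tent a b c (p + 2) p = a (p + 2) := by
      unfold Tent; rw [if_neg (by omega), if_neg (by omega), if_pos rfl]
    have eL : Lent m l (p + 2) p = l (p + 2) := by
      unfold Lent; rw [if_neg (by omega), if_neg (by omega), if_pos rfl]
    have eU : Uent αd p p = αd p := by
      unfold Uent; rw [if_pos rfl]
    rw [eT, eL, eU] at e
    have hδ2 : deltaExt a b c (((p + 1 : ℕ) : ℤ) - 2) = ∏ k ∈ Finset.range p, αd k := by
      have h := hD p (by omega)
      rw [show ((p : ℕ) : ℤ) - 1 = ((p + 1 : ℕ) : ℤ) - 2 by push_cast; ring] at h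
      exact h
    rw [hδ2, hD (p + 1) (by omega)]
    show l (p + 2) = a (p + 2) * (∏ k ∈ Finset.range p, αd k) / ∏ k ∈ Finset.range (p + 1), αd k
    rw [e, Finset.prod_range_succ,
      eq_div_iff (mul_ne_zero (hDne p (by omega)) (hα p (by omega)))]
    ring
  · -- αd
    intro n h1 h2
    obtain ⟨p, rfl⟩ : ∃ p, n = p + 1 := ⟨n - 1, by omega⟩
    have hδ2 : deltaExt a b c (((p + 1 : ℕ) : ℤ) - 2) = ∏ k ∈ Finset.range p, αd k := by
      have h := hD p (by omega)
      rw [show ((p : ℕ) : ℤ) - 1 = ((p + 1 : ℕ) : ℤ) - 2 by push_cast; ring] at h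
      exact h
    rw [hδ2, hD (p + 1) h2, Nat.add_sub_cancel, Finset.prod_range_succ,
      mul_div_cancel_left₀ _ (hDne p (by omega))]
end

section
/- With T = L₁L₂U a tetradiagonal Hessenberg matrix with bidiagonal factorization, and B_n the type II recursion polynomials of T, the polynomial B̂_0 := (UB)_0 equals x; more generally, both B̂_n := (L₂UB)_n and B̂̂_n := (UB)_n are monic polynomials of degree n+1 divisible by x, i.e., B̂_n = x·B̃_n and B̂̂_n = x·B̃̃_n for monic polynomials B̃_n, B̃̃_n of degree n. -/
open Polynomial

noncomputable section

/-- Second subdiagonal entry `a_n = α_{3n-1}α_{3n-3}α_{3n-5}` of `T = L₁L₂U`. -/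
def ca (α : ℤ → ℝ) (n : ℕ) : ℝ :=
  α (3 * (n : ℤ) - 1) * α (3 * (n : ℤ) - 3) * α (3 * (n : ℤ) - 5)

/-- First subdiagonal entry `b_n = α_{3n}α_{3n-2} + α_{3n-1}α_{3n-2} + α_{3n-1}α_{3n-3}`. -/
def cb (α : ℤ → ℝ) (n : ℕ) : ℝ :=
  α (3 * (n : ℤ)) * α (3 * (n : ℤ) - 2) + α (3 * (n : ℤ) - 1) * α (3 * (n : ℤ) - 2) +
    α (3 * (n : ℤ) - 1) * α (3 * (n : ℤ) - 3)

/-- Diagonal entry `c_n = α_{3n+1} + α_{3n} + α_{3n-1}`. -/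
def cc (α : ℤ → ℝ) (n : ℕ) : ℝ :=
  α (3 * (n : ℤ) + 1) + α (3 * (n : ℤ)) + α (3 * (n : ℤ) - 1)

/-- Action of the upper bidiagonal matrix `U` on a column vector of polynomials:
`(Uv)_n = α_{3n+1} v_n + v_{n+1}`. -/
def applyU (α : ℤ → ℝ) (v : ℕ → Polynomial ℝ) (n : ℕ) : Polynomial ℝ :=
  C (α (3 * (n : ℤ) + 1)) * v n + v (n + 1)

/-- Action of `L₁` on a column vector: `(L₁v)_n = v_n + α_{3n-1} v_{n-1}` (row `n` has
subdiagonal entry `α_{3(n-1)+2} = α_{3n-1}`; at `n = 0` the coefficient `α_{-1} = 0`). -/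
def applyL1 (α : ℤ → ℝ) (v : ℕ → Polynomial ℝ) (n : ℕ) : Polynomial ℝ :=
  v n + C (α (3 * (n : ℤ) - 1)) * v (n - 1)

/-- Action of `L₂` on a column vector: `(L₂v)_n = v_n + α_{3n} v_{n-1}`. -/
def applyL2 (α : ℤ → ℝ) (v : ℕ → Polynomial ℝ) (n : ℕ) : Polynomial ℝ :=
  v n + C (α (3 * (n : ℤ))) * v (n - 1)

/-- Right action of `L₁` on a row vector: `(AL₁)_n = A_n + α_{3n+2} A_{n+1}`. -/
def leftL1 (α : ℤ → ℝ) (A : ℕ → Polynomial ℝ) (n : ℕ) : Polynomial ℝ :=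
  A n + C (α (3 * (n : ℤ) + 2)) * A (n + 1)

/-- Right action of `L₂` on a row vector: `(AL₂)_n = A_n + α_{3n+3} A_{n+1}`. -/
def leftL2 (α : ℤ → ℝ) (A : ℕ → Polynomial ℝ) (n : ℕ) : Polynomial ℝ :=
  A n + C (α (3 * (n : ℤ) + 3)) * A (n + 1)

/-- Right action of the tetradiagonal Hessenberg matrix `T` on a row vector:
`(AT)_n = A_{n-1} + c_n A_n + b_{n+1} A_{n+1} + a_{n+2} A_{n+2}` (no `A_{-1}` term at `n = 0`). -/
def leftT (α : ℤ → ℝ) (A : ℕ → Polynomial ℝ) (n : ℕ) : Polynomial ℝ :=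
  (if n = 0 then 0 else A (n - 1)) + C (cc α n) * A n + C (cb α (n + 1)) * A (n + 1) +
    C (ca α (n + 2)) * A (n + 2)

end


private lemma sub_aux7 {p q : Polynomial ℝ} {n : ℕ} (hp : p.Monic) (hpn : p.natDegree = n)
    (hq : q.natDegree < n) : (p - q).Monic ∧ (p - q).natDegree = n := by
  have hpne : p ≠ 0 := hp.ne_zero
  have hd : q.degree < p.degree := by
    rcases eq_or_ne q 0 with rfl | hq0
    · rw [Polynomial.degree_eq_natDegree hpne]
      simp only [Polynomial.degree_zero]
      exact WithBot.bot_lt_coe _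
    · rw [Polynomial.degree_eq_natDegree hq0, Polynomial.degree_eq_natDegree hpne, hpn]
      exact_mod_cast hq
  refine ⟨hp.sub_of_left hd, ?_⟩
  rw [Polynomial.natDegree_eq_of_degree_eq (Polynomial.degree_sub_eq_left_of_degree_lt hd), hpn]

open Polynomial in
theorem stmt7 (α : ℤ → ℝ) (hα0 : ∀ k : ℤ, k ≤ 0 → α k = 0)
    (hαpos : ∀ k : ℤ, 1 ≤ k → 0 < α k)
    (B : ℕ → Polynomial ℝ) (hB0 : B 0 = 1)
    (hBrec : ∀ n : ℕ, B (n + 1) =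
      (X - C (cc α n)) * B n - C (cb α n) * B (n - 1) - C (ca α n) * B (n - 2)) :
    applyU α B 0 = X ∧
    (∀ n : ℕ, ∃ p : Polynomial ℝ, p.Monic ∧ p.natDegree = n ∧
      applyL2 α (applyU α B) n = X * p) ∧
    (∀ n : ℕ, ∃ p : Polynomial ℝ, p.Monic ∧ p.natDegree = n ∧
      applyU α B n = X * p) := by

  have h0 : α 0 = 0 := hα0 0 le_rfl
  have hm1 : α (-1) = 0 := hα0 _ (by norm_num)
  have hm2 : α (-2) = 0 := hα0 _ (by norm_num)
  have hm3 : α (-3) = 0 := hα0 _ (by norm_num)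
  -- Monicity and degree of B
  have hBdeg : ∀ n, (B n).Monic ∧ (B n).natDegree = n := by
    intro n
    induction n using Nat.strong_induction_on with
    | _ n ih =>
      match n with
      | 0 => rw [hB0]; exact ⟨monic_one, natDegree_one⟩
      | 1 =>
        have h1 : B 1 = X - C (α 1) := by
          rw [hBrec 0]
          simp [cc, cb, ca, hB0, h0, hm1, hm2, hm3]
          try ring
        rw [h1]
        constructor
        · exact monic_X_sub_C _
        · exact natDegree_X_sub_C _
      | (m + 2) =>
        have hrec := hBrec (m + 1)
        have hidx1 : m + 1 - 1 = m := rfl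
        have hidx2 : m + 1 - 2 = m - 1 := rfl
        rw [hidx1, hidx2] at hrec
        obtain ⟨hm1M, hm1d⟩ := ih (m + 1) (by omega)
        obtain ⟨hmM, hmd⟩ := ih m (by omega)
        obtain ⟨hm2M, hm2d⟩ := ih (m - 1) (by omega)
        have hp : ((X - C (cc α (m+1))) * B (m+1)).Monic := (monic_X_sub_C _).mul hm1M
        have hpd : ((X - C (cc α (m+1))) * B (m+1)).natDegree = m + 2 := by
          rw [(monic_X_sub_C _).natDegree_mul hm1M, natDegree_X_sub_C, hm1d]
          omega
        have s1 := sub_aux7 hp hpd (n := m + 2)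
          (q := C (cb α (m+1)) * B m) (by
            calc (C (cb α (m+1)) * B m).natDegree ≤ (B m).natDegree := natDegree_C_mul_le _ _
              _ < m + 2 := by omega)
        have s2 := sub_aux7 s1.1 s1.2 (n := m + 2)
          (q := C (ca α (m+1)) * B (m - 1)) (by
            calc (C (ca α (m+1)) * B (m-1)).natDegree ≤ (B (m-1)).natDegree :=
                natDegree_C_mul_le _ _
              _ < m + 2 := by omega)
        rw [hrec]
        exact s2
  -- Key identity: L₁ L₂ U B = x B
  have hT : ∀ n, applyL1 α (applyL2 α (applyU α B)) n = X * B n := by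
    intro n
    match n with
    | 0 =>
      have hr := hBrec 0
      simp only [Nat.zero_sub] at hr
      simp only [applyL1, applyL2, applyU, cc, cb, ca] at hr ⊢
      norm_num at hr ⊢
      rw [hr, hB0]
      simp [h0, hm1, hm2, hm3]
      try ring
    | 1 =>
      have hr := hBrec 1
      simp only [applyL1, applyL2, applyU, cc, cb, ca] at hr ⊢
      norm_num at hr ⊢
      rw [hr, hB0]
      simp [h0, hm1, hm2, hm3]
      try ring
    | (m + 2) =>
      have hr := hBrec (m + 2)
      have hidx1 : m + 2 - 1 = m + 1 := rfl
      have hidx2 : m + 2 - 2 = m := rfl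
      rw [hidx1, hidx2] at hr
      simp only [applyL1, applyL2, applyU, cc, cb, ca] at hr ⊢
      have e1 : m + 2 - 1 = m + 1 := rfl
      have e2 : m + 1 - 1 = m := rfl
      rw [e1, e2]
      push_cast at hr ⊢
      rw [hr]
      simp only [map_add, map_mul]
      ring
  -- Part for L₂ U B
  have hD : ∀ n, ∃ p : Polynomial ℝ, p.Monic ∧ p.natDegree = n ∧
      applyL2 α (applyU α B) n = X * p := by
    intro n
    induction n with
    | zero =>
      refine ⟨1, monic_one, natDegree_one, ?_⟩
      have := hT 0
      simp only [applyL1, Nat.zero_sub] at this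
      have hz : α (3 * ((0:ℕ):ℤ) - 1) = 0 := by norm_num [hm1]
      rw [hz] at this
      simpa [hB0] using this
    | succ n ih =>
      obtain ⟨p, hpM, hpd, hpe⟩ := ih
      have := hT (n + 1)
      simp only [applyL1] at this
      have e : n + 1 - 1 = n := rfl
      rw [e, hpe] at this
      have hDe : applyL2 α (applyU α B) (n+1) =
          X * (B (n+1) - C (α (3 * ((n+1:ℕ):ℤ) - 1)) * p) := by
        have : applyL2 α (applyU α B) (n+1) =
            X * B (n+1) - C (α (3 * ((n+1:ℕ):ℤ) - 1)) * (X * p) := by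
          linear_combination this
        rw [this]; ring
      obtain ⟨hBM, hBd⟩ := hBdeg (n + 1)
      have s := sub_aux7 hBM hBd (n := n + 1) (q := C (α (3 * ((n+1:ℕ):ℤ) - 1)) * p) (by
        calc (C (α (3 * ((n+1:ℕ):ℤ) - 1)) * p).natDegree ≤ p.natDegree :=
            natDegree_C_mul_le _ _
          _ < n + 1 := by omega)
      exact ⟨_, s.1, s.2, hDe⟩
  refine ⟨?_, hD, ?_⟩
  · have := hT 0
    simp only [applyL1, applyL2, applyU, Nat.zero_sub] at this
    have hz1 : α (3 * ((0:ℕ):ℤ) - 1) = 0 := by norm_num [hm1]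
    have hz2 : α (3 * ((0:ℕ):ℤ)) = 0 := by norm_num [h0]
    rw [hz1, hz2] at this
    simp only [map_zero, zero_mul, add_zero, zero_add, mul_one] at this
    rw [hB0, mul_one] at this
    simp only [applyU, hB0, mul_one, Nat.cast_zero, mul_zero, zero_add]
    simpa using this
  · intro n
    induction n with
    | zero =>
      obtain ⟨p, hpM, hpd, hpe⟩ := hD 0
      refine ⟨p, hpM, hpd, ?_⟩
      have : applyL2 α (applyU α B) 0 = applyU α B 0 := by
        simp [applyL2, h0]
      rw [this] at hpe; exact hpe
    | succ n ih =>
      obtain ⟨p, hpM, hpd, hpe⟩ := ih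
      obtain ⟨q, hqM, hqd, hqe⟩ := hD (n + 1)
      have hDe : applyL2 α (applyU α B) (n+1) =
          applyU α B (n+1) + C (α (3 * ((n+1:ℕ):ℤ))) * applyU α B n := by
        simp [applyL2]
      rw [hqe, hpe] at hDe
      have hCe : applyU α B (n+1) = X * (q - C (α (3 * ((n+1:ℕ):ℤ))) * p) := by
        linear_combination -hDe
      have s := sub_aux7 hqM hqd (n := n + 1) (q := C (α (3 * ((n+1:ℕ):ℤ))) * p) (by
        calc (C (α (3 * ((n+1:ℕ):ℤ))) * p).natDegree ≤ p.natDegree := natDegree_C_mul_le _ _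
          _ < n + 1 := by omega)
      exact ⟨_, s.1, s.2, hCe⟩
end

section
/- Let T = L₁L₂U be a tetradiagonal Hessenberg matrix with PBF, B_n its type II recursion polynomials, and T̂ := L₂UL₁ its first Darboux transform. Then the entries of T̂ are given explicitly by: diagonal ĉ_n = α_{3n+2} + α_{3n+1} + α_{3n}, first subdiagonal b̂_n = α_{3n}α_{3n-1} + α_{3n+1}α_{3n-1} + α_{3n}α_{3n-2}, second subdiagonal â_n = α_{3n}α_{3n-2}α_{3n-4}, superdiagonal 1; with α_k = 0 for k ≤ 0. -/
lemma sum_two {N : ℕ} (a : ℕ) (f : ℕ → ℝ) (hN : a + 1 < N)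
    (h : ∀ k, k ≠ a → k ≠ a + 1 → f k = 0) :
    ∑ k ∈ Finset.range N, f k = f a + f (a + 1) := by
  have hsub : ({a, a+1} : Finset ℕ) ⊆ Finset.range N := by
    intro x hx; simp at hx; rcases hx with h | h <;> simp [h] <;> omega
  rw [← Finset.sum_subset hsub (fun x _ hx => by
    simp at hx; exact h x hx.1 hx.2)]
  rw [Finset.sum_pair (by omega)]

def Mc (α : ℤ → ℝ) (i j : ℕ) : ℝ :=
  if j = i + 1 then 1
  else if i = j then α (3 * (i : ℤ)) + α (3 * (i : ℤ) + 1)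
  else if i = j + 1 then α (3 * (i : ℤ)) * α (3 * (i : ℤ) - 2)
  else 0

lemma Mlem (α : ℤ → ℝ) (hα0 : ∀ k : ℤ, k ≤ 0 → α k = 0) (i j : ℕ) :
    matMul (L2mat α) (Umat α) i j = Mc α i j := by
  unfold matMul
  cases i with
  | zero =>
    rw [Finset.sum_eq_single 0
      (fun k _ hk => by
        simp only [L2mat]
        rw [if_neg (by omega), if_neg (by omega), zero_mul])
      (fun h => by simp at h)]
    have h0 : α 0 = 0 := hα0 0 le_rfl
    simp only [L2mat, Umat, Mc, Nat.cast_zero]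
    rcases j with _ | _ | j <;> norm_num [h0] <;> split_ifs <;> simp_all <;> omega
  | succ n =>
    rw [sum_two n _ (by omega) (fun k h1 h2 => by
      simp only [L2mat]
      rw [if_neg (by omega), if_neg (by omega), zero_mul])]
    simp only [L2mat, Umat, Mc, if_true]
    split_ifs <;> first | omega | (subst_vars; push_cast; ring_nf) <;>
      first | rfl | omega | (push_cast; ring_nf)

theorem stmt9 (α : ℤ → ℝ) (hα0 : ∀ k : ℤ, k ≤ 0 → α k = 0)
    (hαpos : ∀ k : ℤ, 1 ≤ k → 0 < α k) :
    ∀ i j : ℕ, matMul (matMul (L2mat α) (Umat α)) (L1mat α) i j =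
      if i = j then α (3 * (i : ℤ) + 2) + α (3 * (i : ℤ) + 1) + α (3 * (i : ℤ))
      else if i = j + 1 then
        α (3 * (i : ℤ)) * α (3 * (i : ℤ) - 1) + α (3 * (i : ℤ) + 1) * α (3 * (i : ℤ) - 1) +
          α (3 * (i : ℤ)) * α (3 * (i : ℤ) - 2)
      else if i = j + 2 then α (3 * (i : ℤ)) * α (3 * (i : ℤ) - 2) * α (3 * (i : ℤ) - 4)
      else if j = i + 1 then 1 else 0 := by
  intro i j
  show (∑ k ∈ Finset.range (i + j + 2), matMul (L2mat α) (Umat α) i k * L1mat α k j) = _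
  rw [Finset.sum_congr rfl (fun k _ => by rw [Mlem α hα0 i k])]
  rw [sum_two j _ (by omega) (fun k h1 h2 => by
    simp only [L1mat]
    rw [if_neg (by omega), if_neg (by omega), mul_zero])]
  simp only [L1mat, Mc, if_true]
  split_ifs <;> first | omega | (subst_vars; push_cast; ring_nf) <;>
    first | rfl | omega | (push_cast; ring_nf)
end

section
/- (Parametrization of PBF, part 1) Let T = L₁L₂U with parameters α_n, and B_n the type II recursion polynomials of T. Then for all n ≥ 0: α_{3n+1} = −B_{n+1}(0)/B_n(0), provided B_n(0) ≠ 0 for all n. -/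
open Polynomial

/-!
Write `β n = (B n).eval 0`. Evaluating the recursion at `0` and grouping `c_n` and `b_n` gives
`β_{n+1} + α_{3n+1} β_n = -(α_{3n} + α_{3n-1}) (β_n + α_{3n-2} β_{n-1})
  - α_{3n-1} α_{3n-3} (β_{n-1} + α_{3n-5} β_{n-2})`,
so the defects `β_{n+1} + α_{3n+1} β_n` satisfy a homogeneous recursion and vanish by induction.
For `n = 0, 1` the truncated indices `n - 1`, `n - 2` point back to `β 0`, but there the
coefficients carry a factor `α_k` with `k ≤ 0`.
-/

section RecursionAtZero

variable {α : ℤ → ℝ} {β : ℕ → ℝ}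
  (hβ : ∀ n : ℕ, β (n + 1) = -cc α n * β n - cb α n * β (n - 1) - ca α n * β (n - 2))
include hβ

theorem seq_succ_eq_neg_mul_zero (hα0 : ∀ k : ℤ, k ≤ 0 → α k = 0) :
    β 1 = -α 1 * β 0 := by
  have h := hβ 0
  simp only [cc, cb, ca, Nat.cast_zero, mul_zero, zero_add, zero_sub] at h
  rw [h, hα0 0 le_rfl, hα0 (-1) (by norm_num)]
  ring

theorem seq_succ_eq_neg_mul_one (hα0 : ∀ k : ℤ, k ≤ 0 → α k = 0) :
    β 2 = -α 4 * β 1 := by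
  have h := hβ 1
  have h0 := seq_succ_eq_neg_mul_zero hβ hα0
  simp only [cc, cb, ca, Nat.cast_one] at h
  norm_num [hα0 0 le_rfl] at h
  linear_combination h - (α 3 + α 2) * h0

theorem seq_succ_eq_neg_mul_add_two (n : ℕ)
    (h0 : β (n + 1) = -α (3 * (n : ℤ) + 1) * β n)
    (h1 : β (n + 2) = -α (3 * ((n + 1 : ℕ) : ℤ) + 1) * β (n + 1)) :
    β (n + 3) = -α (3 * ((n + 2 : ℕ) : ℤ) + 1) * β (n + 2) := by
  have h := hβ (n + 2)
  simp only [cc, cb, ca, Nat.add_sub_cancel, Nat.reduceSubDiff] at h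
  set k : ℤ := 3 * ((n + 2 : ℕ) : ℤ)
  rw [show 3 * ((n + 1 : ℕ) : ℤ) + 1 = k - 2 by omega] at h1
  rw [show 3 * (n : ℤ) + 1 = k - 5 by omega] at h0
  linear_combination h - (α k + α (k - 1)) * h1 - α (k - 1) * α (k - 3) * h0

theorem seq_succ_eq_neg_mul (hα0 : ∀ k : ℤ, k ≤ 0 → α k = 0) (n : ℕ) :
    β (n + 1) = -α (3 * (n : ℤ) + 1) * β n := by
  induction n using Nat.twoStepInduction with
  | zero => simpa using seq_succ_eq_neg_mul_zero hβ hα0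
  | one => simpa using seq_succ_eq_neg_mul_one hβ hα0
  | more n h0 h1 => exact seq_succ_eq_neg_mul_add_two hβ n h0 h1

end RecursionAtZero

theorem eval_zero_succ_of_recursion {α : ℤ → ℝ} {B : ℕ → ℝ[X]}
    (hBrec : ∀ n : ℕ, B (n + 1) =
      (X - C (cc α n)) * B n - C (cb α n) * B (n - 1) - C (ca α n) * B (n - 2))
    (n : ℕ) :
    (B (n + 1)).eval 0 = -cc α n * (B n).eval 0 - cb α n * (B (n - 1)).eval 0 -
      ca α n * (B (n - 2)).eval 0 := by
  simp [hBrec n]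

open Polynomial in
theorem stmt14_general (α : ℤ → ℝ) (hα0 : ∀ k : ℤ, k ≤ 0 → α k = 0)
    (B : ℕ → Polynomial ℝ)
    (hBrec : ∀ n : ℕ, B (n + 1) =
      (X - C (cc α n)) * B n - C (cb α n) * B (n - 1) - C (ca α n) * B (n - 2))
    (hBne : ∀ n : ℕ, (B n).eval 0 ≠ 0) :
    ∀ n : ℕ, α (3 * (n : ℤ) + 1) = -((B (n + 1)).eval 0) / (B n).eval 0 := by
  intro n
  have h : (B (n + 1)).eval 0 = -α (3 * (n : ℤ) + 1) * (B n).eval 0 :=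
    seq_succ_eq_neg_mul (β := fun m => (B m).eval 0) (eval_zero_succ_of_recursion hBrec) hα0 n
  rw [h, neg_mul, neg_neg, mul_div_cancel_right₀ _ (hBne n)]

open Polynomial in
theorem stmt14 (α : ℤ → ℝ) (hα0 : ∀ k : ℤ, k ≤ 0 → α k = 0)
    (B : ℕ → Polynomial ℝ) (hB0 : B 0 = 1)
    (hBrec : ∀ n : ℕ, B (n + 1) =
      (X - C (cc α n)) * B n - C (cb α n) * B (n - 1) - C (ca α n) * B (n - 2))
    (hBne : ∀ n : ℕ, (B n).eval 0 ≠ 0) :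
    ∀ n : ℕ, α (3 * (n : ℤ) + 1) = -((B (n + 1)).eval 0) / (B n).eval 0 :=
  stmt14_general α hα0 B hBrec hBne
end

section
/- (Parametrization of PBF, part 3) Let T = L₁L₂U with parameters α, and A⁽¹⁾, A⁽²⁾ the two type I sequences with 1 + να_2 = 0. Then for each n ≥ 0, the row vector (α_{3n+2}+α_{3n+3}, α_{3n+5}α_{3n+3}) equals −(A⁽¹⁾_n(0), A⁽²⁾_n(0)) times the inverse of the 2×2 matrix with rows (A⁽¹⁾_{n+1}(0), A⁽²⁾_{n+1}(0)) and (A⁽¹⁾_{n+2}(0), A⁽²⁾_{n+2}(0)); equivalently, α_{3n+3} = −[(A⁽¹⁾_n(0)A⁽²⁾_{n+1}(0) − A⁽¹⁾_{n+1}(0)A⁽²⁾_n(0)) / (A⁽¹⁾_{n+1}(0)A⁽²⁾_{n+2}(0) − A⁽¹⁾_{n+2}(0)A⁽²⁾_{n+1}(0))] · A⁽¹⁾_{n+2}(0)/A⁽¹⁾_{n+1}(0), assuming the 2×2 matrix is invertible. -/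
open Polynomial

noncomputable section
def xx (α : ℤ → ℝ) (n : ℕ) : ℝ := α (3 * (n : ℤ) + 2) + α (3 * (n : ℤ) + 3)
def yy (α : ℤ → ℝ) (n : ℕ) : ℝ := α (3 * (n : ℤ) + 3) * α (3 * (n : ℤ) + 5)
def Bb (α : ℤ → ℝ) (A : ℕ → Polynomial ℝ) (n : ℕ) : Polynomial ℝ :=
  A n + C (xx α n) * A (n + 1) + C (yy α n) * A (n + 2)
def Pp (α : ℤ → ℝ) : ℕ → ℝ
  | 0 => α 1
  | n + 1 => Pp α n * α (3 * (n : ℤ) + 4)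
def Dd (α : ℤ → ℝ) (A : ℕ → Polynomial ℝ) : ℕ → Polynomial ℝ
  | 0 => A 0
  | n + 1 => C (Pp α n) * A (n + 1) - Dd α A n
def Yy (α : ℤ → ℝ) : ℕ → ℝ
  | 0 => 1
  | n + 1 => Yy α n * yy α n
def Mm (α : ℤ → ℝ) (A1 A2 : ℕ → Polynomial ℝ) (n : ℕ) : Polynomial ℝ :=
  Dd α A1 n * A2 (n + 1) - Dd α A2 n * A1 (n + 1)
def Ww (A1 A2 : ℕ → Polynomial ℝ) (n : ℕ) : Polynomial ℝ :=
  A1 n * A2 (n + 1) - A1 (n + 1) * A2 n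
def Nn (α : ℤ → ℝ) (A1 A2 : ℕ → Polynomial ℝ) (n : ℕ) : Polynomial ℝ :=
  Dd α A1 n * A2 n - Dd α A2 n * A1 n

end

lemma leftT_zero (α : ℤ → ℝ) (hα0 : ∀ k : ℤ, k ≤ 0 → α k = 0) (A : ℕ → Polynomial ℝ) :
    leftT α A 0 = C (α 1) * Bb α A 0 := by
  have h0 : α 0 = 0 := hα0 0 le_rfl
  have h1 : α (-1) = 0 := hα0 (-1) (by norm_num)
  simp only [leftT, Bb, cc, ca, cb, xx, yy, if_pos rfl]
  norm_num [h0, h1, map_add, map_mul]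
  ring

lemma leftT_succ (α : ℤ → ℝ) (A : ℕ → Polynomial ℝ) (n : ℕ) :
    leftT α A (n + 1) = C (α (3 * (n : ℤ) + 4)) * Bb α A (n + 1) + Bb α A n := by
  simp only [leftT, Bb, cc, ca, cb, xx, yy, Nat.succ_sub_one, if_neg (Nat.succ_ne_zero n)]
  push_cast
  simp only [map_add, map_mul]
  ring_nf

lemma hR (α : ℤ → ℝ) (hα0 : ∀ k : ℤ, k ≤ 0 → α k = 0) (A : ℕ → Polynomial ℝ)
    (heig : ∀ n : ℕ, leftT α A n = X * A n) (n : ℕ) :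
    C (Pp α n) * Bb α A n = X * Dd α A n := by
  induction n with
  | zero =>
    have h := (leftT_zero α hα0 A).symm.trans (heig 0)
    simpa [Pp, Dd] using h
  | succ k ih =>
    have h := (leftT_succ α A k).symm.trans (heig (k + 1))
    have : C (Pp α k) * (C (α (3 * (k : ℤ) + 4)) * Bb α A (k + 1)) =
        C (Pp α k) * (X * A (k + 1) - Bb α A k) := by
      rw [← h]; ring
    calc C (Pp α (k + 1)) * Bb α A (k + 1)
        = C (Pp α k) * (C (α (3 * (k : ℤ) + 4)) * Bb α A (k + 1)) := by
          simp only [Pp, map_mul]; ring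
      _ = C (Pp α k) * (X * A (k + 1) - Bb α A k) := this
      _ = X * (C (Pp α k) * A (k + 1)) - C (Pp α k) * Bb α A k := by ring
      _ = X * Dd α A (k + 1) := by rw [ih]; simp only [Dd]; ring

lemma hI1 (α : ℤ → ℝ) (A1 A2 : ℕ → Polynomial ℝ) (k : ℕ)
    (e1 : C (Pp α k) * Bb α A1 k = X * Dd α A1 k)
    (e2 : C (Pp α k) * Bb α A2 k = X * Dd α A2 k) :
    C (Pp α k) * (C (yy α k) * Mm α A1 A2 (k + 1)) =
      C (Pp α k) * ((C (xx α k) - X) * Mm α A1 A2 k + Nn α A1 A2 k +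
        C (Pp α k) * Ww A1 A2 k) := by
  simp only [Mm, Nn, Ww, Dd, Bb] at *
  linear_combination (C (Pp α k) * A1 (k + 1) - Dd α A1 k) * e2 -
    (C (Pp α k) * A2 (k + 1) - Dd α A2 k) * e1

lemma hI2 (α : ℤ → ℝ) (A1 A2 : ℕ → Polynomial ℝ) (k : ℕ)
    (e1 : C (Pp α k) * Bb α A1 k = X * Dd α A1 k)
    (e2 : C (Pp α k) * Bb α A2 k = X * Dd α A2 k) :
    C (yy α k) * (C (Pp α k) * Ww A1 A2 (k + 1)) =
      C (Pp α k) * Ww A1 A2 k - X * Mm α A1 A2 k := by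
  simp only [Mm, Ww, Bb] at *
  linear_combination A1 (k + 1) * e2 - A2 (k + 1) * e1

lemma Nn_succ (α : ℤ → ℝ) (A1 A2 : ℕ → Polynomial ℝ) (k : ℕ) :
    Nn α A1 A2 (k + 1) = -Mm α A1 A2 k := by
  simp only [Nn, Mm, Dd]; ring

section
variable {p q r : Polynomial ℝ} {c d : ℝ} {k : ℕ}

lemma deg_aux (hp : p.degree ≤ k) (hq : q.degree ≤ k) (hr : r.degree ≤ k) :
    ((C c - X) * p + q + C d * r).degree ≤ ((k + 1 : ℕ) : WithBot ℕ) := by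
  have hCX : (C c - X : Polynomial ℝ).degree ≤ 1 :=
    (degree_sub_le _ _).trans (max_le (degree_C_le.trans zero_le_one) degree_X_le)
  have h1 : ((C c - X) * p).degree ≤ ((k + 1 : ℕ) : WithBot ℕ) := by
    refine (degree_mul_le _ _).trans ?_
    calc (C c - X : Polynomial ℝ).degree + p.degree ≤ 1 + (k : WithBot ℕ) :=
          add_le_add hCX hp
      _ = ((k + 1 : ℕ) : WithBot ℕ) := by push_cast; ring
  have h2 : q.degree ≤ ((k + 1 : ℕ) : WithBot ℕ) :=
    hq.trans (by exact_mod_cast Nat.cast_le.mpr (Nat.le_succ k))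
  have h3 : (C d * r).degree ≤ ((k + 1 : ℕ) : WithBot ℕ) := by
    refine (degree_mul_le _ _).trans ?_
    calc (C d : Polynomial ℝ).degree + r.degree ≤ 0 + (k : WithBot ℕ) :=
          add_le_add degree_C_le hr
      _ ≤ ((k + 1 : ℕ) : WithBot ℕ) := by
          rw [zero_add]; exact_mod_cast Nat.cast_le.mpr (Nat.le_succ k)
  exact (degree_add_le _ _).trans (max_le ((degree_add_le _ _).trans (max_le h1 h2)) h3)

lemma deg_aux2 (hp : p.degree ≤ k) (hr : r.degree ≤ k) :
    (C d * r - X * p).degree ≤ ((k + 1 : ℕ) : WithBot ℕ) := by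
  have h3 : (C d * r).degree ≤ ((k + 1 : ℕ) : WithBot ℕ) := by
    refine (degree_mul_le _ _).trans ?_
    calc (C d : Polynomial ℝ).degree + r.degree ≤ 0 + (k : WithBot ℕ) :=
          add_le_add degree_C_le hr
      _ ≤ ((k + 1 : ℕ) : WithBot ℕ) := by
          rw [zero_add]; exact_mod_cast Nat.cast_le.mpr (Nat.le_succ k)
  have h1 : (X * p).degree ≤ ((k + 1 : ℕ) : WithBot ℕ) := by
    refine (degree_mul_le _ _).trans ?_
    calc (X : Polynomial ℝ).degree + p.degree ≤ 1 + (k : WithBot ℕ) :=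
          add_le_add degree_X_le hp
      _ = ((k + 1 : ℕ) : WithBot ℕ) := by push_cast; ring
  exact (degree_sub_le _ _).trans (max_le h3 h1)

lemma coeff_aux (hp : p.degree ≤ k) (hq : q.degree ≤ k) (hr : r.degree ≤ k) :
    ((C c - X) * p + q + C d * r).coeff (k + 1) = -p.coeff k := by
  have hlt : ((k : WithBot ℕ)) < ((k + 1 : ℕ) : WithBot ℕ) := by exact_mod_cast Nat.lt_succ_self k
  have hp1 : p.coeff (k + 1) = 0 := coeff_eq_zero_of_degree_lt (hp.trans_lt hlt)
  have hq1 : q.coeff (k + 1) = 0 := coeff_eq_zero_of_degree_lt (hq.trans_lt hlt)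
  have hr1 : r.coeff (k + 1) = 0 := coeff_eq_zero_of_degree_lt (hr.trans_lt hlt)
  rw [sub_mul]
  simp [coeff_add, coeff_sub, coeff_C_mul, coeff_X_mul, hp1, hq1, hr1]
end
lemma phi (α : ℤ → ℝ) (A1 A2 : ℕ → Polynomial ℝ)
    (hA10 : A1 0 = 1) (hA20 : A2 0 = 0) (hA21 : A2 1 = 1)
    (e1 : ∀ n, C (Pp α n) * Bb α A1 n = X * Dd α A1 n)
    (e2 : ∀ n, C (Pp α n) * Bb α A2 n = X * Dd α A2 n) :
    ∀ k, ((Mm α A1 A2 k).coeff k * Yy α k = (-1) ^ k ∧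
      (Mm α A1 A2 k).degree ≤ (k : ℕ) ∧ (Ww A1 A2 k).degree ≤ (k : ℕ) ∧
      (Nn α A1 A2 k).degree ≤ (k : ℕ) ∧ Yy α k ≠ 0 ∧ Pp α k ≠ 0) ∧ yy α k ≠ 0 := by
  -- helper: y_k ≠ 0 from stage-k facts
  have hyne : ∀ k, (Mm α A1 A2 k).coeff k * Yy α k = (-1) ^ k →
      (Mm α A1 A2 k).degree ≤ (k : ℕ) → (Ww A1 A2 k).degree ≤ (k : ℕ) →
      (Nn α A1 A2 k).degree ≤ (k : ℕ) → Yy α k ≠ 0 → Pp α k ≠ 0 → yy α k ≠ 0 := by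
    intro k hMc hMd hWd hNd hY hP hy0
    have h := hI1 α A1 A2 k (e1 k) (e2 k)
    have hM1 := mul_left_cancel₀ (C_ne_zero.mpr hP) h
    rw [hy0, map_zero, zero_mul] at hM1
    have hc := congrArg (fun p : Polynomial ℝ => p.coeff (k + 1)) hM1
    simp only [coeff_zero] at hc
    rw [coeff_aux hMd hNd hWd] at hc
    have : (Mm α A1 A2 k).coeff k = 0 := by linarith [hc]
    rw [this, zero_mul] at hMc
    exact (pow_ne_zero k (by norm_num : (-1 : ℝ) ≠ 0)) hMc.symm
  have main : ∀ k, (Mm α A1 A2 k).coeff k * Yy α k = (-1) ^ k ∧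
      (Mm α A1 A2 k).degree ≤ (k : ℕ) ∧ (Ww A1 A2 k).degree ≤ (k : ℕ) ∧
      (Nn α A1 A2 k).degree ≤ (k : ℕ) ∧ Yy α k ≠ 0 ∧ Pp α k ≠ 0 := by
    intro k
    induction k with
    | zero =>
      have hM0 : Mm α A1 A2 0 = 1 := by simp [Mm, Dd, hA10, hA20, hA21]
      have hW0 : Ww A1 A2 0 = 1 := by simp [Ww, hA10, hA20, hA21]
      have hN0 : Nn α A1 A2 0 = 0 := by simp [Nn, Dd, hA10, hA20]
      refine ⟨by simp [hM0, Yy], by simp [hM0, degree_one], by simp [hW0, degree_one],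
        by simp [hN0], one_ne_zero, ?_⟩
      intro hP0
      have h := e1 0
      rw [hP0, map_zero, zero_mul] at h
      simp only [Dd, hA10, mul_one] at h
      exact X_ne_zero h.symm
    | succ k ih =>
      obtain ⟨hMc, hMd, hWd, hNd, hY, hP⟩ := ih
      have hy := hyne k hMc hMd hWd hNd hY hP
      have hM1 := mul_left_cancel₀ (C_ne_zero.mpr hP) (hI1 α A1 A2 k (e1 k) (e2 k))
      -- coefficient invariant at k+1
      have hc := congrArg (fun p : Polynomial ℝ => p.coeff (k + 1)) hM1
      simp only [coeff_C_mul] at hc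
      rw [coeff_aux hMd hNd hWd] at hc
      have hMc1 : (Mm α A1 A2 (k + 1)).coeff (k + 1) * Yy α (k + 1) = (-1) ^ (k + 1) := by
        simp only [Yy]
        rw [pow_succ]
        linear_combination Yy α k * hc - hMc
      -- degree bounds at k+1
      have hMd1 : (Mm α A1 A2 (k + 1)).degree ≤ ((k + 1 : ℕ) : WithBot ℕ) := by
        rw [← degree_C_mul (p := Mm α A1 A2 (k + 1)) hy, hM1]
        exact deg_aux hMd hNd hWd
      have hWd1 : (Ww A1 A2 (k + 1)).degree ≤ ((k + 1 : ℕ) : WithBot ℕ) := by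
        have h2 := hI2 α A1 A2 k (e1 k) (e2 k)
        rw [← degree_C_mul (p := Ww A1 A2 (k + 1)) (mul_ne_zero hy hP), map_mul, mul_assoc, h2]
        exact deg_aux2 hMd hWd
      have hNd1 : (Nn α A1 A2 (k + 1)).degree ≤ ((k + 1 : ℕ) : WithBot ℕ) := by
        rw [Nn_succ, degree_neg]
        exact hMd.trans (by exact_mod_cast Nat.cast_le.mpr (Nat.le_succ k))
      have hY1 : Yy α (k + 1) ≠ 0 := by simp only [Yy]; exact mul_ne_zero hY hy
      refine ⟨hMc1, hMd1, hWd1, hNd1, hY1, ?_⟩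
      intro hP0
      have h1 := e1 (k + 1); have h2 := e2 (k + 1)
      rw [hP0, map_zero, zero_mul] at h1 h2
      have d1 : Dd α A1 (k + 1) = 0 := (mul_eq_zero.mp h1.symm).resolve_left X_ne_zero
      have d2 : Dd α A2 (k + 1) = 0 := (mul_eq_zero.mp h2.symm).resolve_left X_ne_zero
      have hMm0 : Mm α A1 A2 (k + 1) = 0 := by simp [Mm, d1, d2]
      rw [hMm0, coeff_zero, zero_mul] at hMc1
      exact (pow_ne_zero (k + 1) (by norm_num : (-1 : ℝ) ≠ 0)) hMc1.symm
  intro k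
  obtain ⟨hMc, hMd, hWd, hNd, hY, hP⟩ := main k
  exact ⟨⟨hMc, hMd, hWd, hNd, hY, hP⟩, hyne k hMc hMd hWd hNd hY hP⟩

open Polynomial in
theorem stmt16 (α : ℤ → ℝ) (hα0 : ∀ k : ℤ, k ≤ 0 → α k = 0)
    (ν : ℝ) (hν : ν ≠ 0)
    (A1 A2 : ℕ → Polynomial ℝ)
    (hA1eig : ∀ n : ℕ, leftT α A1 n = X * A1 n)
    (hA2eig : ∀ n : ℕ, leftT α A2 n = X * A2 n)
    (hA10 : A1 0 = 1) (hA11 : A1 1 = C ν)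
    (hA20 : A2 0 = 0) (hA21 : A2 1 = 1)
    (hνα : 1 + ν * α 2 = 0)
    (hdet : ∀ n : ℕ,
      (!![(A1 (n + 1)).eval 0, (A2 (n + 1)).eval 0;
          (A1 (n + 2)).eval 0, (A2 (n + 2)).eval 0]).det ≠ 0)
    (hA1ne : ∀ n : ℕ, (A1 (n + 1)).eval 0 ≠ 0) :
    ∀ n : ℕ,
      ((![α (3 * (n : ℤ) + 2) + α (3 * (n : ℤ) + 3),
          α (3 * (n : ℤ) + 5) * α (3 * (n : ℤ) + 3)] : Fin 2 → ℝ) =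
        - Matrix.vecMul ![(A1 n).eval 0, (A2 n).eval 0]
            (!![(A1 (n + 1)).eval 0, (A2 (n + 1)).eval 0;
                (A1 (n + 2)).eval 0, (A2 (n + 2)).eval 0])⁻¹) ∧
      α (3 * (n : ℤ) + 3) =
        -(((A1 n).eval 0 * (A2 (n + 1)).eval 0 - (A1 (n + 1)).eval 0 * (A2 n).eval 0) /
            ((A1 (n + 1)).eval 0 * (A2 (n + 2)).eval 0 -
              (A1 (n + 2)).eval 0 * (A2 (n + 1)).eval 0)) *
          ((A1 (n + 2)).eval 0 / (A1 (n + 1)).eval 0) := by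
  have e1 : ∀ n, C (Pp α n) * Bb α A1 n = X * Dd α A1 n := hR α hα0 A1 hA1eig
  have e2 : ∀ n, C (Pp α n) * Bb α A2 n = X * Dd α A2 n := hR α hα0 A2 hA2eig
  have Φ := phi α A1 A2 hA10 hA20 hA21 e1 e2
  have hPi : ∀ n, Pp α n ≠ 0 := fun n => (Φ n).1.2.2.2.2.2
  have hy : ∀ n, yy α n ≠ 0 := fun n => (Φ n).2
  have h3ne : ∀ n : ℕ, α (3 * (n : ℤ) + 3) ≠ 0 := by
    intro n h; exact hy n (by simp [yy, h])
  have h5ne : ∀ n : ℕ, α (3 * (n : ℤ) + 5) ≠ 0 := by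
    intro n h; exact hy n (by simp [yy, h])
  have hval : ∀ (A : ℕ → Polynomial ℝ), (∀ n, C (Pp α n) * Bb α A n = X * Dd α A n) →
      ∀ n, (A n).eval 0 + xx α n * (A (n + 1)).eval 0 + yy α n * (A (n + 2)).eval 0 = 0 := by
    intro A e n
    have h := congrArg (fun p : Polynomial ℝ => p.eval 0) (e n)
    simp only [eval_mul, eval_C, eval_X, zero_mul] at h
    have := mul_eq_zero.mp h
    rcases this with h' | h'
    · exact absurd h' (hPi n)
    · simpa [Bb, eval_add, eval_mul, eval_C] using h'
  have hval1 := hval A1 e1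
  have hval2 := hval A2 e2
  have hg : ∀ n, (A1 n).eval 0 + α (3 * (n : ℤ) + 2) * (A1 (n + 1)).eval 0 = 0 := by
    intro n
    induction n with
    | zero =>
      simp only [Nat.cast_zero, mul_zero, zero_add, hA10, hA11, eval_one, eval_C]
      linarith [hνα]
    | succ k ihg =>
      have hv := hval1 k
      simp only [xx, yy] at hv
      have hz : α (3 * (k : ℤ) + 3) * ((A1 (k + 1)).eval 0 +
          α (3 * (k : ℤ) + 5) * (A1 (k + 2)).eval 0) = 0 := by
        linear_combination hv - ihg
      have := (mul_eq_zero.mp hz).resolve_left (h3ne k)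
      have hcast : 3 * ((k + 1 : ℕ) : ℤ) + 2 = 3 * (k : ℤ) + 5 := by push_cast; ring
      rw [hcast]
      exact this
  intro n
  set u0 := (A1 n).eval 0
  set u1 := (A1 (n + 1)).eval 0
  set u2 := (A1 (n + 2)).eval 0
  set v0 := (A2 n).eval 0
  set v1 := (A2 (n + 1)).eval 0
  set v2 := (A2 (n + 2)).eval 0
  have E1 : u0 + (α (3 * (n : ℤ) + 2) + α (3 * (n : ℤ) + 3)) * u1 +
      α (3 * (n : ℤ) + 3) * α (3 * (n : ℤ) + 5) * u2 = 0 := by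
    have := hval1 n; simpa only [xx, yy] using this
  have E2 : v0 + (α (3 * (n : ℤ) + 2) + α (3 * (n : ℤ) + 3)) * v1 +
      α (3 * (n : ℤ) + 3) * α (3 * (n : ℤ) + 5) * v2 = 0 := by
    have := hval2 n; simpa only [xx, yy] using this
  have G : u1 + α (3 * (n : ℤ) + 5) * u2 = 0 := by
    have := hg (n + 1)
    have hcast : 3 * ((n + 1 : ℕ) : ℤ) + 2 = 3 * (n : ℤ) + 5 := by push_cast; ring
    rwa [hcast] at this
  have hdetn : u1 * v2 - v1 * u2 ≠ 0 := by
    have := hdet n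
    rwa [Matrix.det_fin_two_of] at this
  constructor
  · -- part 1
    set M : Matrix (Fin 2) (Fin 2) ℝ := !![u1, v1; u2, v2] with hM
    have hMdet : IsUnit M.det := isUnit_iff_ne_zero.mpr (hdet n)
    have key : Matrix.vecMul ![α (3 * (n : ℤ) + 2) + α (3 * (n : ℤ) + 3),
        α (3 * (n : ℤ) + 5) * α (3 * (n : ℤ) + 3)] M = ![-u0, -v0] := by
      funext i
      fin_cases i <;>
        simp [hM, Matrix.vecMul, dotProduct, Fin.sum_univ_two] <;>
        [linear_combination E1; linear_combination E2]
    calc (![α (3 * (n : ℤ) + 2) + α (3 * (n : ℤ) + 3),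
        α (3 * (n : ℤ) + 5) * α (3 * (n : ℤ) + 3)] : Fin 2 → ℝ)
        = Matrix.vecMul (Matrix.vecMul ![α (3 * (n : ℤ) + 2) + α (3 * (n : ℤ) + 3),
            α (3 * (n : ℤ) + 5) * α (3 * (n : ℤ) + 3)] M) M⁻¹ := by
          rw [Matrix.vecMul_vecMul, Matrix.mul_nonsing_inv _ hMdet, Matrix.vecMul_one]
      _ = Matrix.vecMul ![-u0, -v0] M⁻¹ := by rw [key]
      _ = - Matrix.vecMul ![u0, v0] M⁻¹ := by
          rw [show (![-u0, -v0] : Fin 2 → ℝ) = -![u0, v0] from by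
            funext i; fin_cases i <;> simp, Matrix.neg_vecMul]
  · -- part 2
    have hu1 : u1 ≠ 0 := hA1ne n
    have hdetn' : u1 * v2 - u2 * v1 ≠ 0 := by
      intro h; exact hdetn (by linarith)
    have key2 : α (3 * (n : ℤ) + 3) * ((u1 * v2 - u2 * v1) * u1) =
        -((u0 * v1 - u1 * v0) * u2) := by
      linear_combination u2 * v1 * E1 - u2 * u1 * E2 +
        α (3 * (n : ℤ) + 3) * (u1 * v2 - u2 * v1) * G
    rw [neg_mul, div_mul_div_comm, ← neg_div, eq_div_iff (mul_ne_zero hdetn' hu1)]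
    linear_combination key2
end

section
/- (Christoffel formula for the Darboux transform) Let T = L₁L₂U with PBF, and let B_n be the type II polynomials with B_n(0) ≠ 0 for all n. Then the transformed type II polynomials B̃̃_n := (1/x)(UB)_n satisfy x·B̃̃_n(x) = B_{n+1}(x) − (B_{n+1}(0)/B_n(0))·B_n(x), where α_{3n+1} = −B_{n+1}(0)/B_n(0); in particular the right-hand side vanishes at x = 0 and B̃̃_n is a monic polynomial of degree n. -/
open Polynomial

theorem aux_monic (α : ℤ → ℝ) (B : ℕ → Polynomial ℝ) (hB0 : B 0 = 1)
    (hBrec : ∀ n : ℕ, B (n + 1) =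
      (X - C (cc α n)) * B n - C (cb α n) * B (n - 1) - C (ca α n) * B (n - 2)) :
    ∀ n : ℕ, (B n).Monic ∧ (B n).natDegree = n := by
  intro n
  induction n using Nat.strong_induction_on with
  | _ n ih =>
    match n with
    | 0 => exact ⟨by rw [hB0]; exact monic_one, by rw [hB0]; simp⟩
    | n + 1 =>
      have hn := ih n (by omega)
      have h1 := ih (n - 1) (by omega)
      have h2 := ih (n - 2) (by omega)
      have hq : ((X - C (cc α n)) * B n).Monic := (monic_X_sub_C _).mul hn.1
      have hqd : ((X - C (cc α n)) * B n).degree = ((n + 1 : ℕ) : WithBot ℕ) := by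
        rw [degree_eq_natDegree hq.ne_zero,
          natDegree_mul (monic_X_sub_C _).ne_zero hn.1.ne_zero, natDegree_X_sub_C, hn.2, Nat.add_comm]
      have key : ∀ (c : ℝ) (m : ℕ), m ≤ n →
          (C c * B m).degree < (((n : ℕ) + 1 : ℕ) : WithBot ℕ) := by
        intro c m hm
        calc (C c * B m).degree ≤ (C c).degree + (B m).degree := degree_mul_le _ _
          _ ≤ 0 + (B m).degree := add_le_add degree_C_le le_rfl
          _ = (B m).degree := zero_add _
          _ ≤ (B m).natDegree := degree_le_natDegree
          _ < (((n : ℕ) + 1 : ℕ) : WithBot ℕ) := by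
              rw [(ih m (by omega)).2]; exact_mod_cast Nat.lt_succ_of_le hm
      have hrd : (C (cb α n) * B (n - 1) + C (ca α n) * B (n - 2)).degree <
          ((X - C (cc α n)) * B n).degree := by
        rw [hqd]
        exact lt_of_le_of_lt (degree_add_le _ _)
          (max_lt (key _ _ (by omega)) (key _ _ (by omega)))
      have heq : B (n + 1) = (X - C (cc α n)) * B n -
          (C (cb α n) * B (n - 1) + C (ca α n) * B (n - 2)) := by
        rw [hBrec n]; ring
      constructor
      · rw [heq]; exact hq.sub_of_left hrd
      · rw [heq]
        have := degree_sub_eq_left_of_degree_lt hrd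
        have hdeg : ((X - C (cc α n)) * B n -
            (C (cb α n) * B (n - 1) + C (ca α n) * B (n - 2))).degree = ((n + 1 : ℕ) : WithBot ℕ) := by
          rw [this, hqd]
        exact natDegree_eq_of_degree_eq_some hdeg

theorem aux_eval (α : ℤ → ℝ) (hα0 : ∀ k : ℤ, k ≤ 0 → α k = 0)
    (B : ℕ → Polynomial ℝ) (hB0 : B 0 = 1)
    (hBrec : ∀ n : ℕ, B (n + 1) =
      (X - C (cc α n)) * B n - C (cb α n) * B (n - 1) - C (ca α n) * B (n - 2)) :
    ∀ n : ℕ, (B (n + 1)).eval 0 = -(α (3 * (n : ℤ) + 1)) * (B n).eval 0 := by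
  intro n
  induction n using Nat.strong_induction_on with
  | _ n ih =>
    match n with
    | 0 =>
      have := hBrec 0
      simp only [Nat.zero_sub] at this
      rw [this]
      simp only [eval_sub, eval_mul, eval_X, eval_C, hB0, eval_one]
      unfold ca cb cc
      norm_num
      rw [hα0 0 (by norm_num), hα0 (-1) (by norm_num), hα0 (-2) (by norm_num),
        hα0 (-3) (by norm_num), hα0 (-5) (by norm_num)]
      ring
    | 1 =>
      have h0 := ih 0 (by omega)
      have := hBrec 1
      norm_num at this
      rw [this]
      simp only [eval_sub, eval_mul, eval_X, eval_C, hB0, eval_one]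
      unfold ca cb cc at *
      push_cast at *
      rw [hα0 0 (by norm_num)]
      simp only [hB0, eval_one] at h0
      linear_combination (-(α 3) - α 2) * h0
    | (n + 2) =>
      have h1 := ih n (by omega)
      have h2 := ih (n + 1) (by omega)
      have := hBrec (n + 2)
      norm_num at this
      rw [this]
      simp only [eval_sub, eval_mul, eval_X, eval_C]
      unfold ca cb cc at *
      push_cast at *
      rw [show (3 * ((n : ℤ) + 2) + 1) = 3 * (n : ℤ) + 7 from by ring,
        show (3 * ((n : ℤ) + 2) - 1) = 3 * (n : ℤ) + 5 from by ring,
        show (3 * ((n : ℤ) + 2) - 2) = 3 * (n : ℤ) + 4 from by ring,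
        show (3 * ((n : ℤ) + 2) - 3) = 3 * (n : ℤ) + 3 from by ring,
        show (3 * ((n : ℤ) + 2) - 5) = 3 * (n : ℤ) + 1 from by ring,
        show (3 * ((n : ℤ) + 2)) = 3 * (n : ℤ) + 6 from by ring]
      rw [show (3 * ((n : ℤ) + 1) + 1) = 3 * (n : ℤ) + 4 from by ring] at h2
      linear_combination (-(α (3 * n + 6)) - α (3 * n + 5)) * h2 -
        α (3 * n + 5) * α (3 * n + 3) * h1

open Polynomial in
theorem stmt19 (α : ℤ → ℝ) (hα0 : ∀ k : ℤ, k ≤ 0 → α k = 0)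
    (hαpos : ∀ k : ℤ, 1 ≤ k → 0 < α k)
    (B : ℕ → Polynomial ℝ) (hB0 : B 0 = 1)
    (hBrec : ∀ n : ℕ, B (n + 1) =
      (X - C (cc α n)) * B n - C (cb α n) * B (n - 1) - C (ca α n) * B (n - 2))
    (hBne : ∀ n : ℕ, (B n).eval 0 ≠ 0) :
    ∀ n : ℕ, ∃ p : Polynomial ℝ, p.Monic ∧ p.natDegree = n ∧
      applyU α B n = X * p ∧
      X * p = B (n + 1) - C ((B (n + 1)).eval 0 / (B n).eval 0) * B n := by
  intro n
  have hmon := aux_monic α B hB0 hBrec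
  have hev := aux_eval α hα0 B hB0 hBrec n
  have hdiv : (B (n + 1)).eval 0 / (B n).eval 0 = -(α (3 * (n : ℤ) + 1)) := by
    rw [hev, mul_div_assoc, div_self (hBne n), mul_one]
  set q : Polynomial ℝ := C (α (3 * (n : ℤ) + 1)) * B n + B (n + 1) with hqdef
  have hq0 : q.eval 0 = 0 := by
    simp only [hqdef, eval_add, eval_mul, eval_C, hev]; ring
  have hqeq : q = B (n + 1) - C ((B (n + 1)).eval 0 / (B n).eval 0) * B n := by
    rw [hdiv, map_neg]; ring
  have hqm : q.Monic := by
    have h1 := (hmon (n + 1)).1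
    have hlt : (C (α (3 * (n : ℤ) + 1)) * B n).degree < (B (n + 1)).degree := by
      calc (C (α (3 * (n : ℤ) + 1)) * B n).degree
          ≤ (C (α (3 * (n : ℤ) + 1))).degree + (B n).degree := degree_mul_le _ _
        _ ≤ 0 + (B n).degree := add_le_add degree_C_le le_rfl
        _ = (B n).degree := zero_add _
        _ ≤ (B n).natDegree := degree_le_natDegree
        _ < (B (n + 1)).degree := by
            rw [(hmon n).2, degree_eq_natDegree h1.ne_zero, (hmon (n + 1)).2]
            exact_mod_cast Nat.lt_succ_self n
    have := h1.add_of_left (q := C (α (3 * (n : ℤ) + 1)) * B n) hlt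
    rwa [add_comm] at this
  have hqd : q.natDegree = n + 1 := by
    have h1 := (hmon (n + 1)).1
    have hlt : (C (α (3 * (n : ℤ) + 1)) * B n).degree < (B (n + 1)).degree := by
      calc (C (α (3 * (n : ℤ) + 1)) * B n).degree
          ≤ (C (α (3 * (n : ℤ) + 1))).degree + (B n).degree := degree_mul_le _ _
        _ ≤ 0 + (B n).degree := add_le_add degree_C_le le_rfl
        _ = (B n).degree := zero_add _
        _ ≤ (B n).natDegree := degree_le_natDegree
        _ < (B (n + 1)).degree := by
            rw [(hmon n).2, degree_eq_natDegree h1.ne_zero, (hmon (n + 1)).2]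
            exact_mod_cast Nat.lt_succ_self n
    have hd : q.degree = (B (n + 1)).degree := by
      rw [hqdef, add_comm, ← sub_neg_eq_add]
      rw [degree_sub_eq_left_of_degree_lt (by rwa [degree_neg])]
    exact natDegree_eq_of_degree_eq_some (hd.trans (show (B (n + 1)).degree
      = (((n : ℕ) + 1 : ℕ) : WithBot ℕ) from by
      rw [degree_eq_natDegree h1.ne_zero, (hmon (n + 1)).2]))
  refine ⟨q.divX, ?_, ?_, ?_, ?_⟩
  · have hXq : X * q.divX = q := by
      have := X_mul_divX_add q
      rwa [coeff_zero_eq_eval_zero, hq0, map_zero, add_zero] at this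
    have : (X * q.divX).leadingCoeff = 1 := by rw [hXq]; exact hqm
    rwa [leadingCoeff_mul, leadingCoeff_X, one_mul] at this
  · have hXq : X * q.divX = q := by
      have := X_mul_divX_add q
      rwa [coeff_zero_eq_eval_zero, hq0, map_zero, add_zero] at this
    have hne : q.divX ≠ 0 := by
      intro h
      rw [h, mul_zero] at hXq
      exact hqm.ne_zero hXq.symm
    have := natDegree_mul (X_ne_zero (R := ℝ)) hne
    rw [hXq, natDegree_X, hqd] at this
    omega
  · show C (α (3 * (n : ℤ) + 1)) * B n + B (n + 1) = X * q.divX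
    have := X_mul_divX_add q
    rw [coeff_zero_eq_eval_zero, hq0, map_zero, add_zero] at this
    rw [this]
  · have hXq : X * q.divX = q := by
      have := X_mul_divX_add q
      rwa [coeff_zero_eq_eval_zero, hq0, map_zero, add_zero] at this
    rw [hXq, hqeq]
end
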